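/- arXiv:math/0603688 — 6 statements merged into one kernel-verified Lean document; each statement's English description precedes it below -/
import Mathlib

section
/- Let S be a (possibly noncommutative) ring and R a commutative subring of S. If a matrix A ∈ Mat_n(R) is invertible in Mat_n(S), then det A (computed in R) is invertible in S. -/
/-!
A scalar matrix commuting with `A.map f` commutes with its inverse `B`, so every entry of `B`
commutes with everything that commutes with `f R`: the entries of `A.map f` and of `B` all lie
in the double centralizer of `f R`. As `f R` is commutative, so is its double centralizer, and
over that commutative ring `A.map f * B = 1` makes `det (A.map f) = f (det A)` a unit.
-/

-- For the `CommRing` instance on a subring satisfying `IsMulCommutative`.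
open scoped IsMulCommutative

namespace Matrix

variable {n S : Type*} [Fintype n] [DecidableEq n] [Ring S]

theorem commute_apply_of_mul_eq_one {M N : Matrix n n S} (hMN : M * N = 1) (hNM : N * M = 1)
    {y : S} (hy : ∀ i j, Commute y (M i j)) (i j : n) : Commute y (N i j) := by
  let u : (Matrix n n S)ˣ := ⟨M, N, hMN, hNM⟩
  have hM : Commute (scalar n y) u := scalar_commute_iff.2 (ext hy)
  exact congrFun (congrFun (scalar_commute_iff.1 hM.units_inv_right) i) j

theorem apply_mem_centralizer_centralizer_of_mul_eq_one {M N : Matrix n n S}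
    (hMN : M * N = 1) (hNM : N * M = 1) {s : Set S} (hM : ∀ i j, M i j ∈ s) (i j : n) :
    N i j ∈ s.centralizer.centralizer := fun _ hy =>
  commute_apply_of_mul_eq_one hMN hNM (fun k l => (hy _ (hM k l)).symm) i j

end Matrix

theorem Subring.isMulCommutative_centralizer_centralizer {S : Type*} [Ring S] {s : Set S}
    (hs : ∀ x ∈ s, ∀ y ∈ s, x * y = y * x) :
    IsMulCommutative (Subring.centralizer s.centralizer) :=
  .of_setLike_mul_comm fun _ hx _ hy => Set.centralizer_centralizer_comm_of_comm hs _ hx _ hy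

theorem det_isUnit_of_invertible_over_ring_general
    {R S : Type*} [CommRing R] [Ring S] (f : R →+* S)
    {n : ℕ} (A : Matrix (Fin n) (Fin n) R)
    (h : ∃ B : Matrix (Fin n) (Fin n) S, A.map f * B = 1 ∧ B * A.map f = 1) :
    IsUnit (f A.det) := by
  obtain ⟨B, hAB, hBA⟩ := h
  let T := Subring.centralizer (Set.range f).centralizer
  have : IsMulCommutative T := Subring.isMulCommutative_centralizer_centralizer <| by
    rintro _ ⟨a, rfl⟩ _ ⟨b, rfl⟩
    exact ((Commute.all a b).map f).eq
  have hf (r : R) : f r ∈ T := Set.subset_centralizer_centralizer ⟨r, rfl⟩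
  have hB := Matrix.apply_mem_centralizer_centralizer_of_mul_eq_one (s := Set.range f)
    hAB hBA (fun i j => ⟨A i j, rfl⟩)
  let B' : Matrix (Fin n) (Fin n) T := .of fun i j => ⟨B i j, hB i j⟩
  have hAB' : A.map (f.codRestrict T hf) * B' = 1 := by
    refine Matrix.map_injective (f := T.subtype) Subtype.val_injective ?_
    dsimp only
    rw [Matrix.map_mul, Matrix.map_one _ (map_zero _) (map_one _)]
    exact hAB
  have hdet := (Matrix.isUnit_det_of_right_inverse hAB').map T.subtype
  rwa [← RingHom.mapMatrix_apply, ← RingHom.map_det] at hdet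

/-- If `R` is a commutative subring of a ring `S` (encoded as an injective ring
homomorphism `f : R →+* S` from a commutative ring) and a matrix `A` over `R` is
invertible over `S`, then `det A` is invertible in `S`. -/
theorem det_isUnit_of_invertible_over_ring
    {R S : Type*} [CommRing R] [Ring S] (f : R →+* S) (hf : Function.Injective f)
    {n : ℕ} (A : Matrix (Fin n) (Fin n) R)
    (h : ∃ B : Matrix (Fin n) (Fin n) S, A.map f * B = 1 ∧ B * A.map f = 1) :
    IsUnit (f A.det) :=
  det_isUnit_of_invertible_over_ring_general f A h
end

section
/- Let S be a ring, R a commutative subring, A ∈ Mat_n(R), and B ∈ Mat_n(S) with AB = I. Then det(A) · ∑_{τ ∈ S_n} sgn(τ) · b_{τ(1),1} · b_{τ(2),2} · ⋯ · b_{τ(n),n} = 1, where the products of entries of B are taken in the fixed left-to-right order of column indices. -/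
open Finset

lemma aux_step {R S : Type*} [CommRing R] [Ring S] (f : R →+* S)
    {n : ℕ} (A : Matrix (Fin n) (Fin n) R) (B : Matrix (Fin n) (Fin n) S)
    (hAB : A.map f * B = 1) :
    ∀ (m : ℕ) (e : Fin m → Fin n), Function.Injective e →
      ∑ g : Fin m → Fin n,
        f ((A.submatrix e g).det) * (List.ofFn fun j => B (g j) (e j)).prod = 1 := by
  intro m
  induction m with
  | zero =>
      intro e he
      simp [Matrix.det_fin_zero]
  | succ m ih =>
      intro e he
      have key : ∀ g : Fin (m + 1) → Fin n,
          f ((A.submatrix e g).det) * (List.ofFn fun j => B (g j) (e j)).prod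
          = ∑ i : Fin (m + 1), (-1 : S) ^ (i : ℕ) *
              (f ((A.submatrix (e ∘ i.succAbove) (g ∘ Fin.succ)).det) *
                ((f (A (e i) (g 0)) * B (g 0) (e 0)) *
                  (List.ofFn fun j : Fin m => B (g j.succ) (e j.succ)).prod)) := by
        intro g
        rw [Matrix.det_succ_column_zero, map_sum, Finset.sum_mul]
        refine Finset.sum_congr rfl fun i _ => ?_
        rw [List.ofFn_succ, List.prod_cons]
        simp only [Matrix.submatrix_apply, Matrix.submatrix_submatrix]
        have hc : f (A (e i) (g 0)) * f ((A.submatrix (e ∘ i.succAbove) (g ∘ Fin.succ)).det)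
            = f ((A.submatrix (e ∘ i.succAbove) (g ∘ Fin.succ)).det) * f (A (e i) (g 0)) := by
          rw [← map_mul, ← map_mul, mul_comm]
        simp only [map_mul, map_pow, map_neg, map_one, mul_assoc]
        congr 1
        rw [← mul_assoc, ← mul_assoc, hc, mul_assoc, mul_assoc]
      have he0 : ∀ i : Fin (m + 1), ((1 : Matrix (Fin n) (Fin n) S) (e i) (e 0))
          = if i = 0 then 1 else 0 := by
        intro i
        rw [Matrix.one_apply]
        by_cases h : i = 0
        · simp [h]
        · rw [if_neg h, if_neg (fun hh => h (he hh))]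
      calc
        ∑ g : Fin (m + 1) → Fin n,
            f ((A.submatrix e g).det) * (List.ofFn fun j => B (g j) (e j)).prod
          = ∑ g : Fin (m + 1) → Fin n, ∑ i : Fin (m + 1), (-1 : S) ^ (i : ℕ) *
              (f ((A.submatrix (e ∘ i.succAbove) (g ∘ Fin.succ)).det) *
                ((f (A (e i) (g 0)) * B (g 0) (e 0)) *
                  (List.ofFn fun j : Fin m => B (g j.succ) (e j.succ)).prod)) :=
            Finset.sum_congr rfl fun g _ => key g
        _ = ∑ p : Fin n × (Fin m → Fin n), ∑ i : Fin (m + 1), (-1 : S) ^ (i : ℕ) *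
              (f ((A.submatrix (e ∘ i.succAbove) p.2).det) *
                ((f (A (e i) p.1) * B p.1 (e 0)) *
                  (List.ofFn fun j : Fin m => B (p.2 j) (e j.succ)).prod)) := by
            refine (Fintype.sum_equiv (Fin.consEquiv (fun _ => Fin n)) _ _ ?_).symm
            intro p
            refine Finset.sum_congr rfl fun i _ => ?_
            have h1 : (Fin.consEquiv (fun _ => Fin n)) p ∘ Fin.succ = p.2 := by
              funext j; simp [Fin.consEquiv]
            simp only [Fin.consEquiv, Equiv.coe_fn_mk, Fin.cons_zero, Fin.cons_succ,
              Function.comp_def]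
        _ = ∑ h : Fin m → Fin n, ∑ i : Fin (m + 1), (-1 : S) ^ (i : ℕ) *
              (f ((A.submatrix (e ∘ i.succAbove) h).det) *
                (((A.map f * B) (e i) (e 0)) *
                  (List.ofFn fun j : Fin m => B (h j) (e j.succ)).prod)) := by
            rw [Fintype.sum_prod_type, Finset.sum_comm]
            refine Finset.sum_congr rfl fun h _ => ?_
            rw [Finset.sum_comm]
            refine Finset.sum_congr rfl fun i _ => ?_
            rw [← Finset.mul_sum]
            congr 1
            rw [Matrix.mul_apply, Finset.sum_mul, Finset.mul_sum]
            refine Finset.sum_congr rfl fun c _ => ?_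
            rw [Matrix.map_apply]
        _ = ∑ h : Fin m → Fin n,
              f ((A.submatrix (e ∘ Fin.succ) h).det) *
                (List.ofFn fun j : Fin m => B (h j) ((e ∘ Fin.succ) j)).prod := by
            refine Finset.sum_congr rfl fun h _ => ?_
            rw [hAB]
            rw [Finset.sum_eq_single 0]
            · simp [Fin.succAbove_zero, he0]
            · intro i _ hi
              rw [he0, if_neg hi]
              simp
            · intro habs
              exact absurd (Finset.mem_univ 0) habs
        _ = 1 := ih (e ∘ Fin.succ) (he.comp (Fin.succ_injective m))


open Equiv Finset in
/-- If `A` is a matrix over a commutative subring `R` of `S` and `B` over `S`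
with `AB = I`, then `det A` times the "ordered determinant" of `B` (products of
entries taken left to right in order of increasing column index) equals `1`. -/
theorem det_mul_ordered_det_eq_one
    {R S : Type*} [CommRing R] [Ring S] (f : R →+* S) (hf : Function.Injective f)
    {n : ℕ} (A : Matrix (Fin n) (Fin n) R) (B : Matrix (Fin n) (Fin n) S)
    (hAB : A.map f * B = 1) :
    f A.det *
      ∑ τ : Equiv.Perm (Fin n),
        (Equiv.Perm.sign τ : ℤ) • (List.ofFn fun j => B (τ j) j).prod = 1 := by
  classical
  have haux := aux_step f A B hAB n id Function.injective_id
  set F : (Fin n → Fin n) → S := fun g =>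
    f ((A.submatrix id g).det) * (List.ofFn fun j => B (g j) (id j)).prod with hF
  have hzero : ∀ g : Fin n → Fin n, ¬Function.Injective g → F g = 0 := by
    intro g hg
    rw [Function.not_injective_iff] at hg
    obtain ⟨a, b, hab, hne⟩ := hg
    simp only [hF]
    rw [Matrix.det_zero_of_column_eq hne (fun k => by simp [hab]), map_zero, zero_mul]
  have h1 : ∑ g : Fin n → Fin n, F g = ∑ σ : Equiv.Perm (Fin n), F ⇑σ := by
    calc ∑ g : Fin n → Fin n, F g
        = ∑ g ∈ Finset.univ.image (fun σ : Equiv.Perm (Fin n) => ⇑σ), F g := by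
          refine (Finset.sum_subset (Finset.subset_univ _) ?_).symm
          intro g _ hg
          refine hzero g fun hinj => hg ?_
          have hb := Finite.injective_iff_bijective.mp hinj
          exact Finset.mem_image.mpr ⟨Equiv.ofBijective g hb, Finset.mem_univ _, rfl⟩
      _ = ∑ σ : Equiv.Perm (Fin n), F ⇑σ :=
          Finset.sum_image (fun x _ y _ h => Equiv.coe_fn_injective h)
  calc f A.det * ∑ τ : Equiv.Perm (Fin n),
          (Equiv.Perm.sign τ : ℤ) • (List.ofFn fun j => B (τ j) j).prod
      = ∑ τ : Equiv.Perm (Fin n),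
          (Equiv.Perm.sign τ : ℤ) • (f A.det * (List.ofFn fun j => B (τ j) j).prod) := by
        rw [Finset.mul_sum]
        exact Finset.sum_congr rfl fun τ _ => (mul_smul_comm _ _ _)

    _ = ∑ σ : Equiv.Perm (Fin n), F ⇑σ := by
        refine Finset.sum_congr rfl fun σ _ => ?_
        simp only [hF]
        simp only [Matrix.det_permute', map_mul, zsmul_eq_mul, id_eq]
        rw [← mul_assoc]
        congr 1
        simp
    _ = ∑ g : Fin n → Fin n, F g := h1.symm
    _ = 1 := haux
end

section
/- Let S be a ring, R a commutative subring, A ∈ Mat_n(R), and B ∈ Mat_n(S) with BA = I. Then (∑_{τ ∈ S_n} sgn(τ) · b_{1,τ(1)} · b_{2,τ(2)} · ⋯ · b_{n,τ(n)}) · det(A) = 1, so det A has a left inverse in S. -/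
open Matrix Finset

private lemma ordered_key
    {R S : Type*} [CommRing R] [Ring S] (f : R →+* S)
    {n : ℕ} (A : Matrix (Fin n) (Fin n) R) (B : Matrix (Fin n) (Fin n) S)
    (hBA : B * A.map f = 1) :
    ∀ k (hk : k ≤ n),
      ∑ τ : Fin k → Fin n,
        (List.ofFn fun i : Fin k => B (Fin.castLE hk i) (τ i)).prod *
          f ((A.submatrix τ (Fin.castLE hk)).det) = 1 := by
  intro k
  induction k with
  | zero =>
      intro hk
      simp [Matrix.det_fin_zero]
  | succ k ih =>
      intro hk
      have hk' : k ≤ n := Nat.le_of_succ_le hk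
      have hcast : ∀ i : Fin k, Fin.castLE hk i.castSucc = Fin.castLE hk' i :=
        fun i => Fin.ext rfl
      have hterm : ∀ (v : Fin n) (τ' : Fin k → Fin n),
          (List.ofFn fun i : Fin (k + 1) =>
              B (Fin.castLE hk i) ((Fin.snoc τ' v : Fin (k+1) → Fin n) i)).prod *
            f ((A.submatrix (Fin.snoc τ' v) (Fin.castLE hk)).det)
          = ∑ j : Fin (k + 1), ((-1 : ℤ) ^ (k + (j : ℕ))) •
              ((List.ofFn fun i : Fin k => B (Fin.castLE hk' i) (τ' i)).prod *
                (B (Fin.castLE hk (Fin.last k)) v * f (A v (Fin.castLE hk j))) *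
                f ((A.submatrix τ' fun i => Fin.castLE hk (j.succAbove i)).det)) := by
        intro v τ'
        have hdet :
            ((A.submatrix (Fin.snoc τ' v) (Fin.castLE hk)).det : R)
            = ∑ j : Fin (k + 1), ((-1 : ℤ) ^ (k + (j : ℕ))) •
                (A v (Fin.castLE hk j) *
                  (A.submatrix τ' fun i => Fin.castLE hk (j.succAbove i)).det) := by
          rw [Matrix.det_succ_row _ (Fin.last k)]
          refine Finset.sum_congr rfl fun j _ => ?_
          rw [Matrix.submatrix_submatrix]
          have hrow : (Fin.snoc τ' v ∘ (Fin.last k).succAbove : Fin k → Fin n) = τ' := by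
            funext i
            simp [Fin.succAbove_last]
          rw [hrow]
          rw [zsmul_eq_mul, Int.cast_pow, Int.cast_neg, Int.cast_one]
          simp [Fin.snoc_last, Fin.val_last, mul_assoc, Function.comp_def]
        have hlist :
            (List.ofFn fun i : Fin (k + 1) =>
                B (Fin.castLE hk i) ((Fin.snoc τ' v : Fin (k+1) → Fin n) i)).prod
            = (List.ofFn fun i : Fin k => B (Fin.castLE hk' i) (τ' i)).prod *
                B (Fin.castLE hk (Fin.last k)) v := by
          rw [List.ofFn_succ', List.concat_eq_append, List.prod_append]
          simp only [Fin.snoc_last, Fin.snoc_castSucc, hcast, List.prod_cons,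
            List.prod_nil, mul_one]
        rw [hlist, hdet, map_sum, Finset.mul_sum]
        refine Finset.sum_congr rfl fun j _ => ?_
        rw [map_zsmul, _root_.map_mul, mul_smul_comm]
        simp only [mul_assoc]
      calc
        ∑ τ : Fin (k + 1) → Fin n,
            (List.ofFn fun i : Fin (k + 1) => B (Fin.castLE hk i) (τ i)).prod *
              f ((A.submatrix τ (Fin.castLE hk)).det)
          = ∑ p : Fin n × (Fin k → Fin n),
              (List.ofFn fun i : Fin (k + 1) =>
                  B (Fin.castLE hk i) ((Fin.snoc p.2 p.1 : Fin (k+1) → Fin n) i)).prod *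
                f ((A.submatrix (Fin.snoc p.2 p.1) (Fin.castLE hk)).det) := by
            rw [← Equiv.sum_comp (Fin.snocEquiv fun _ => Fin n)]
            rfl
        _ = ∑ v : Fin n, ∑ τ' : Fin k → Fin n, ∑ j : Fin (k + 1),
              ((-1 : ℤ) ^ (k + (j : ℕ))) •
              ((List.ofFn fun i : Fin k => B (Fin.castLE hk' i) (τ' i)).prod *
                (B (Fin.castLE hk (Fin.last k)) v * f (A v (Fin.castLE hk j))) *
                f ((A.submatrix τ' fun i => Fin.castLE hk (j.succAbove i)).det)) := by
            rw [Fintype.sum_prod_type]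
            exact Finset.sum_congr rfl fun v _ =>
              Finset.sum_congr rfl fun τ' _ => hterm v τ'
        _ = ∑ τ' : Fin k → Fin n, ∑ j : Fin (k + 1),
              ((-1 : ℤ) ^ (k + (j : ℕ))) •
              ((List.ofFn fun i : Fin k => B (Fin.castLE hk' i) (τ' i)).prod *
                ((1 : Matrix (Fin n) (Fin n) S)
                    (Fin.castLE hk (Fin.last k)) (Fin.castLE hk j)) *
                f ((A.submatrix τ' fun i => Fin.castLE hk (j.succAbove i)).det)) := by
            rw [Finset.sum_comm]
            refine Finset.sum_congr rfl fun τ' _ => ?_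
            rw [Finset.sum_comm]
            refine Finset.sum_congr rfl fun j _ => ?_
            rw [← Finset.smul_sum, ← hBA, Matrix.mul_apply]
            congr 1
            rw [Finset.mul_sum, Finset.sum_mul]
            refine Finset.sum_congr rfl fun x _ => ?_
            rw [Matrix.map_apply]
        _ = ∑ τ' : Fin k → Fin n,
              (List.ofFn fun i : Fin k => B (Fin.castLE hk' i) (τ' i)).prod *
                f ((A.submatrix τ' (Fin.castLE hk')).det) := by
            refine Finset.sum_congr rfl fun τ' _ => ?_
            rw [Finset.sum_eq_single_of_mem (Fin.last k) (Finset.mem_univ _)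
              (fun j _ hj => ?_)]
            · have h1 : (1 : Matrix (Fin n) (Fin n) S)
                  (Fin.castLE hk (Fin.last k)) (Fin.castLE hk (Fin.last k)) = 1 :=
                Matrix.one_apply_eq _
              have hcols : (fun i : Fin k => Fin.castLE hk ((Fin.last k).succAbove i))
                  = Fin.castLE hk' := by
                funext i
                rw [Fin.succAbove_last]
                exact Fin.ext rfl
              have hsgn : ((-1 : ℤ) ^ (k + ((Fin.last k : Fin (k+1)) : ℕ))) = 1 := by
                rw [Fin.val_last]
                exact Even.neg_one_pow ⟨k, by ring⟩
              rw [h1, mul_one, hcols, hsgn, one_smul]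
            · have hne : Fin.castLE hk (Fin.last k) ≠ Fin.castLE hk j := by
                intro h
                exact hj (Fin.ext (congrArg Fin.val h).symm)
              rw [Matrix.one_apply_ne hne, mul_zero, zero_mul, smul_zero]
        _ = 1 := ih hk'

/-- If `A` is a matrix over a commutative subring `R` of `S` and `B` over `S`
with `BA = I`, then the "ordered determinant" of `B` (products of entries taken
in increasing row index order) times `det A` equals `1`, so `det A` has a left
inverse in `S`. -/
theorem ordered_det_mul_det_eq_one
    {R S : Type*} [CommRing R] [Ring S] (f : R →+* S) (hf : Function.Injective f)
    {n : ℕ} (A : Matrix (Fin n) (Fin n) R) (B : Matrix (Fin n) (Fin n) S)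
    (hBA : B * A.map f = 1) :
    (∑ τ : Equiv.Perm (Fin n),
        (Equiv.Perm.sign τ : ℤ) • (List.ofFn fun i => B i (τ i)).prod) *
      f A.det = 1 := by
  have key := ordered_key f A B hBA n (le_refl n)
  simp only [Fin.castLE_rfl, id_eq] at key
  rw [Finset.sum_mul, ← key]
  have hzero : ∀ τ : Fin n → Fin n, ¬ Function.Injective τ →
      (List.ofFn fun i => B i (τ i)).prod * f ((A.submatrix τ id).det) = 0 := by
    intro τ hni
    obtain ⟨a, b, hab, hne⟩ := Function.not_injective_iff.mp hni
    have hrow : (A.submatrix τ id) a = (A.submatrix τ id) b := by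
      funext j
      simp [Matrix.submatrix_apply, hab]
    rw [Matrix.det_zero_of_row_eq hne hrow, map_zero, mul_zero]
  rw [← Finset.sum_subset
      (Finset.filter_subset (fun τ : Fin n → Fin n => Function.Injective τ) Finset.univ)
      (fun τ _ hτ => hzero τ (fun h => hτ (Finset.mem_filter.mpr ⟨Finset.mem_univ _, h⟩)))]
  refine Finset.sum_bij (fun (σ : Equiv.Perm (Fin n)) _ => (σ : Fin n → Fin n))
      (fun σ _ => Finset.mem_filter.mpr ⟨Finset.mem_univ _, σ.injective⟩)
      (fun σ _ σ' _ h => Equiv.coe_fn_injective h)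
      (fun τ hτ => ?_) (fun σ _ => ?_)
  · have hinj : Function.Injective τ := (Finset.mem_filter.mp hτ).2
    exact ⟨Equiv.ofBijective τ (Finite.injective_iff_bijective.mp hinj),
      Finset.mem_univ _, rfl⟩
  · have hd := Matrix.det_permute σ A
    rcases Int.units_eq_one_or (Equiv.Perm.sign σ) with h | h <;> rw [h] at hd ⊢
    · simp only [Units.val_one, Int.cast_one, one_smul, one_mul] at hd ⊢
      rw [hd]
    · simp only [Units.val_neg, Units.val_one, Int.cast_neg, Int.cast_one,
        neg_smul, one_smul, neg_one_mul] at hd ⊢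
      rw [hd, map_neg, mul_neg, neg_mul]
end

section
/- Let S be a ring, R a commutative subring, and T = { t ∈ R : t^{-1} ∈ S }. If x ∈ RT^{-1} is invertible in S, then x^{-1} ∈ RT^{-1}. Hence RT^{-1} is division closed in S, and the division closure D(R,S) equals RT^{-1}. -/
/-- The division closure of a subring `R₀` of `S`: the smallest subring of `S`
containing `R₀` and closed under taking inverses of its elements that are
invertible in `S`. -/
def divisionClosure {S : Type*} [Ring S] (R₀ : Subring S) : Subring S :=
  sInf {D : Subring S | R₀ ≤ D ∧
    ∀ x ∈ D, ∀ y : S, x * y = 1 → y * x = 1 → y ∈ D}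

/-- If `c` commutes with `x` and `y` is a two-sided inverse of `x`, then `c`
commutes with `y`. -/
lemma comm_inv {S : Type*} [Ring S] {x y c : S} (h1 : x * y = 1) (h2 : y * x = 1)
    (hc : c * x = x * c) : y * c = c * y := by
  calc y * c = (y * c) * (x * y) := by rw [h1, mul_one]
    _ = y * ((c * x) * y) := by simp [mul_assoc]
    _ = y * ((x * c) * y) := by rw [hc]
    _ = (y * x) * (c * y) := by simp [mul_assoc]
    _ = c * y := by rw [h2, one_mul]

lemma aux_comm {R S : Type*} [CommRing R] [Ring S] (f : R →+* S) {t : R} {u : S}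
    (h1 : f t * u = 1) (h2 : u * f t = 1) (r : R) : u * f r = f r * u :=
  comm_inv h1 h2 (by rw [← map_mul, ← map_mul, mul_comm])

/-- The subring `RT⁻¹` of `S`. -/
def RTinv {R S : Type*} [CommRing R] [Ring S] (f : R →+* S) : Subring S where
  carrier := {x : S | ∃ (r t : R) (u : S), f t * u = 1 ∧ u * f t = 1 ∧ x = f r * u}
  one_mem' := ⟨1, 1, 1, by simp, by simp, by simp⟩
  zero_mem' := ⟨0, 1, 1, by simp, by simp, by simp⟩
  mul_mem' := by
    rintro x y ⟨r, t, u, h1, h2, rfl⟩ ⟨r', t', u', h1', h2', rfl⟩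
    refine ⟨r * r', t * t', u * u', ?_, ?_, ?_⟩
    · calc f (t * t') * (u * u') = f t * ((f t' * u) * u') := by
            rw [map_mul]; simp [mul_assoc]
        _ = f t * ((u * f t') * u') := by rw [aux_comm f h1 h2]
        _ = (f t * u) * (f t' * u') := by simp [mul_assoc]
        _ = 1 := by rw [h1, h1', mul_one]
    · calc (u * u') * f (t * t') = u * ((u' * f t) * f t') := by
            rw [map_mul]; simp [mul_assoc]
        _ = u * ((f t * u') * f t') := by rw [← aux_comm f h1' h2']
        _ = (u * f t) * (u' * f t') := by simp [mul_assoc]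
        _ = 1 := by rw [h2, h2', mul_one]
    · calc f r * u * (f r' * u') = f r * ((u * f r') * u') := by simp [mul_assoc]
        _ = f r * ((f r' * u) * u') := by rw [aux_comm f h1 h2]
        _ = f (r * r') * (u * u') := by rw [map_mul]; simp [mul_assoc]
  add_mem' := by
    rintro x y ⟨r, t, u, h1, h2, rfl⟩ ⟨r', t', u', h1', h2', rfl⟩
    have huu1 : f (t * t') * (u * u') = 1 := by
      calc f (t * t') * (u * u') = f t * ((f t' * u) * u') := by
            rw [map_mul]; simp [mul_assoc]
        _ = f t * ((u * f t') * u') := by rw [aux_comm f h1 h2]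
        _ = (f t * u) * (f t' * u') := by simp [mul_assoc]
        _ = 1 := by rw [h1, h1', mul_one]
    have huu2 : (u * u') * f (t * t') = 1 := by
      calc (u * u') * f (t * t') = u * ((u' * f t) * f t') := by
            rw [map_mul]; simp [mul_assoc]
        _ = u * ((f t * u') * f t') := by rw [← aux_comm f h1' h2']
        _ = (u * f t) * (u' * f t') := by simp [mul_assoc]
        _ = 1 := by rw [h2, h2', mul_one]
    refine ⟨r * t' + r' * t, t * t', u * u', huu1, huu2, ?_⟩
    have e1 : f (r * t') * (u * u') = f r * u := by
      calc f (r * t') * (u * u') = f r * ((f t' * u) * u') := by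
            rw [map_mul]; simp [mul_assoc]
        _ = f r * ((u * f t') * u') := by rw [aux_comm f h1 h2]
        _ = f r * (u * (f t' * u')) := by simp [mul_assoc]
        _ = f r * u := by rw [h1', mul_one]
    have e2 : f (r' * t) * (u * u') = f r' * u' := by
      calc f (r' * t) * (u * u') = f r' * ((f t * u) * u') := by
            rw [map_mul]; simp [mul_assoc]
        _ = f r' * u' := by rw [h1, one_mul]
    rw [map_add, add_mul, e1, e2]
  neg_mem' := by
    rintro x ⟨r, t, u, h1, h2, rfl⟩
    exact ⟨-r, t, u, h1, h2, by rw [map_neg, neg_mul]⟩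

theorem RTinv_division_closed {R S : Type*} [CommRing R] [Ring S] (f : R →+* S) :
    ∀ x ∈ {x : S | ∃ (r t : R) (u : S), f t * u = 1 ∧ u * f t = 1 ∧ x = f r * u},
      ∀ y : S, x * y = 1 → y * x = 1 →
        y ∈ {x : S | ∃ (r t : R) (u : S), f t * u = 1 ∧ u * f t = 1 ∧ x = f r * u} := by
  rintro x ⟨r, t, u, h1, h2, rfl⟩ y hxy hyx
  -- the inverse of `f r * u` is `f t * (u * y)`, where `u * y` inverts `f r`
  have hrx : f r * (f r * u) = (f r * u) * f r := by
    rw [mul_assoc, aux_comm f h1 h2 r]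
  have hyr : y * f r = f r * y := comm_inv hxy hyx hrx
  refine ⟨t, r, u * y, ?_, ?_, ?_⟩
  · rw [← mul_assoc]; exact hxy
  · calc (u * y) * f r = u * (f r * y) := by rw [mul_assoc, hyr]
      _ = (f r * u) * y := by rw [← mul_assoc, aux_comm f h1 h2 r]
      _ = 1 := hxy
  · rw [← mul_assoc, h1, one_mul]

/-- `RT⁻¹` is division closed in `S`, and the division closure of `R` in `S`
equals `RT⁻¹`. -/
theorem RTinv_division_closed_and_eq_divisionClosure
    {R S : Type*} [CommRing R] [Ring S] (f : R →+* S) (hf : Function.Injective f) :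
    (∀ x ∈ {x : S | ∃ (r t : R) (u : S), f t * u = 1 ∧ u * f t = 1 ∧ x = f r * u},
      ∀ y : S, x * y = 1 → y * x = 1 →
        y ∈ {x : S | ∃ (r t : R) (u : S), f t * u = 1 ∧ u * f t = 1 ∧ x = f r * u}) ∧
    (divisionClosure f.range : Set S) =
      {x : S | ∃ (r t : R) (u : S), f t * u = 1 ∧ u * f t = 1 ∧ x = f r * u} := by
  refine ⟨RTinv_division_closed f, ?_⟩
  have hle : divisionClosure f.range ≤ RTinv f := by
    apply sInf_le
    refine ⟨?_, RTinv_division_closed f⟩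
    rintro x ⟨r, rfl⟩
    exact ⟨r, 1, 1, by simp, by simp, by simp⟩
  have hge : RTinv f ≤ divisionClosure f.range := by
    rintro x ⟨r, t, u, h1, h2, rfl⟩
    rw [divisionClosure, Subring.mem_sInf]
    rintro D ⟨hRD, hDcl⟩
    have hr : f r ∈ D := hRD ⟨r, rfl⟩
    have ht : f t ∈ D := hRD ⟨t, rfl⟩
    exact D.mul_mem hr (hDcl _ ht u h1 h2)
  exact congrArg _ (le_antisymm hle hge)
end

section
/- Let S be a ring, R a commutative subring, A ∈ Mat_n(R), B ∈ Mat_n(S) with AB = I. Then 1 = ∑_{k : Fin n → Fin n} (∑_{σ ∈ S_n} sgn(σ) a_{σ(1),k(1)} ⋯ a_{σ(n),k(n)}) · b_{k(1),1} b_{k(2),2} ⋯ b_{k(n),n}, where all products of b's are taken in increasing order of the second index. -/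
open Finset

section OneEqSumAux

variable {R S : Type*} [CommRing R] [Ring S] (f : R →+* S) {n : ℕ}
  (A : Matrix (Fin n) (Fin n) R) (B : Matrix (Fin n) (Fin n) S)

private def myCoef (m : ℕ) (k : Fin n → Fin n) : R :=
  ∑ σ : Equiv.Perm (Fin n), (Equiv.Perm.sign σ : ℤ) •
    ∏ i : Fin n, if (i : ℕ) < m then (if σ i = i then (1:R) else 0) else A (σ i) (k i)

private def myTail (m : ℕ) (k : Fin n → Fin n) : S :=
  ((List.ofFn fun j => B (k j) j).drop m).prod

private lemma myTail_congr (m : ℕ) (k₁ k₂ : Fin n → Fin n)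
    (h : ∀ j : Fin n, m ≤ (j : ℕ) → k₁ j = k₂ j) : myTail B m k₁ = myTail B m k₂ := by
  unfold myTail
  congr 1
  apply List.ext_getElem
  · simp
  · intro i h1 h2
    simp only [List.getElem_drop, List.getElem_ofFn]
    congr 1
    apply h
    simp [Nat.le_add_right]

private lemma myTail_succ (m : ℕ) (hm : m < n) (k : Fin n → Fin n) :
    myTail B m k = B (k ⟨m, hm⟩) ⟨m, hm⟩ * myTail B (m+1) k := by
  unfold myTail
  rw [List.drop_eq_getElem_cons (by simpa using hm), List.prod_cons]
  congr 1
  simp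

private lemma myExpand (hAB : A.map f * B = 1) (m : ℕ) (hm : m < n) (k' : Fin n → Fin n) :
    f (myCoef A (m+1) k') =
      ∑ v : Fin n, f (myCoef A m (Function.update k' ⟨m, hm⟩ v)) * B v ⟨m, hm⟩ := by
  have hdelta : ∀ p : Fin n,
      (if p = (⟨m, hm⟩ : Fin n) then (1:S) else 0) = ∑ v, f (A p v) * B v ⟨m, hm⟩ := by
    intro p
    have h := congrArg (fun C : Matrix (Fin n) (Fin n) S => C p ⟨m, hm⟩) hAB
    simp only [Matrix.mul_apply, Matrix.map_apply, Matrix.one_apply] at h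
    exact h.symm
  have key : ∀ σ : Equiv.Perm (Fin n),
      f ((Equiv.Perm.sign σ : ℤ) • ∏ i : Fin n,
          if (i:ℕ) < m+1 then (if σ i = i then (1:R) else 0) else A (σ i) (k' i))
      = ∑ v : Fin n, (Equiv.Perm.sign σ : ℤ) •
          (f (∏ i : Fin n, if (i:ℕ) < m then (if σ i = i then (1:R) else 0)
              else A (σ i) (Function.update k' ⟨m, hm⟩ v i)) * B v ⟨m, hm⟩) := by
    intro σ
    rw [map_zsmul]
    have hprod : (∏ i : Fin n, if (i:ℕ) < m+1 then (if σ i = i then (1:R) else 0)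
          else A (σ i) (k' i))
        = (∏ i ∈ univ.erase (⟨m, hm⟩ : Fin n),
            if (i:ℕ) < m+1 then (if σ i = i then (1:R) else 0) else A (σ i) (k' i))
          * (if σ ⟨m, hm⟩ = ⟨m, hm⟩ then 1 else 0) := by
      rw [← Finset.prod_erase_mul univ _ (mem_univ (⟨m, hm⟩ : Fin n))]
      congr 1
      exact if_pos (Nat.lt_succ_self m)
    rw [hprod, map_mul, apply_ite f, map_one, map_zero, hdelta (σ ⟨m, hm⟩), Finset.mul_sum,
      Finset.smul_sum]
    apply Finset.sum_congr rfl
    intro v _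
    congr 1
    rw [← mul_assoc, ← map_mul]
    congr 1
    rw [← Finset.prod_erase_mul univ _ (mem_univ (⟨m, hm⟩ : Fin n))]
    have h2 : (if ((⟨m, hm⟩ : Fin n) : ℕ) < m then (if σ ⟨m, hm⟩ = ⟨m, hm⟩ then (1:R) else 0)
        else A (σ ⟨m, hm⟩) (Function.update k' ⟨m, hm⟩ v ⟨m, hm⟩)) = A (σ ⟨m, hm⟩) v := by
      rw [if_neg (lt_irrefl m), Function.update_self]
    rw [h2]
    refine congrArg f (congrArg (fun x => x * A (σ ⟨m, hm⟩) v)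
      (Finset.prod_congr rfl fun i hi => ?_))
    have hne : i ≠ (⟨m, hm⟩ : Fin n) := (Finset.mem_erase.mp hi).1
    have hne' : (i:ℕ) ≠ m := fun h => hne (Fin.ext h)
    rw [Function.update_of_ne hne]
    by_cases hlt : (i:ℕ) < m
    · rw [if_pos hlt, if_pos (by omega)]
    · rw [if_neg hlt, if_neg (by omega)]
  unfold myCoef
  rw [map_sum]
  rw [Finset.sum_congr rfl fun σ _ => key σ]
  rw [Finset.sum_comm]
  apply Finset.sum_congr rfl
  intro v _
  simp only [← smul_mul_assoc]
  rw [← Finset.sum_mul]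
  congr 1
  rw [map_sum]
  apply Finset.sum_congr rfl
  intro σ _
  rw [map_zsmul]

private lemma myStep (hAB : A.map f * B = 1) (m : ℕ) (hm : m < n)
    (IH : (1:S) = ∑ k ∈ univ.filter
          (fun k : Fin n → Fin n => ∀ j : Fin n, (j:ℕ) < m+1 → k j = j),
        f (myCoef A (m+1) k) * myTail B (m+1) k) :
    (1:S) = ∑ k ∈ univ.filter (fun k : Fin n → Fin n => ∀ j : Fin n, (j:ℕ) < m → k j = j),
        f (myCoef A m k) * myTail B m k := by
  rw [IH]
  set M : Fin n := ⟨m, hm⟩ with hM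
  have hMval : (M : ℕ) = m := rfl
  set F1 : Finset (Fin n → Fin n) :=
    univ.filter (fun k : Fin n → Fin n => ∀ j : Fin n, (j:ℕ) < m+1 → k j = j) with hF1
  set F0 : Finset (Fin n → Fin n) :=
    univ.filter (fun k : Fin n → Fin n => ∀ j : Fin n, (j:ℕ) < m → k j = j) with hF0
  have key : ∀ k' ∈ F1,
      f (myCoef A (m+1) k') * myTail B (m+1) k'
        = ∑ v : Fin n, f (myCoef A m (Function.update k' M v)) *
            myTail B m (Function.update k' M v) := by
    intro k' hk'
    rw [myExpand f A B hAB m hm k', Finset.sum_mul]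
    apply Finset.sum_congr rfl
    intro v _
    rw [myTail_succ B m hm (Function.update k' M v), Function.update_self, ← mul_assoc]
    congr 1
    refine myTail_congr B (m+1) k' _ (fun j hj => ?_)
    have hne : j ≠ M := by
      intro h
      rw [h, hM] at hj
      simp only [Fin.val_mk] at hj
      omega
    exact (Function.update_of_ne hne v k').symm
  rw [Finset.sum_congr rfl key, ← Finset.sum_product']
  apply Finset.sum_nbij' (i := fun p : (Fin n → Fin n) × Fin n => Function.update p.1 M p.2)
    (j := fun k => (Function.update k M M, k M))
  · intro p hp
    rw [Finset.mem_product] at hp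
    obtain ⟨hp1, -⟩ := hp
    rw [hF1, Finset.mem_filter] at hp1
    rw [hF0, Finset.mem_filter]
    refine ⟨Finset.mem_univ _, fun j hj => ?_⟩
    have hjM : j ≠ M := by
      intro h
      rw [h, hM] at hj
      simp only [Fin.val_mk] at hj
      omega
    rw [Function.update_of_ne hjM]
    exact hp1.2 j (by omega)
  · intro k hk
    rw [hF0, Finset.mem_filter] at hk
    rw [Finset.mem_product, hF1, Finset.mem_filter]
    refine ⟨⟨Finset.mem_univ _, fun j hj => ?_⟩, Finset.mem_univ _⟩
    show Function.update k M M j = j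
    by_cases hjM : j = M
    · rw [hjM, Function.update_self]
    · rw [Function.update_of_ne hjM]
      refine hk.2 j ?_
      have : (j:ℕ) ≠ m := fun h => hjM (Fin.ext h)
      omega
  · intro p hp
    rw [Finset.mem_product, hF1, Finset.mem_filter] at hp
    have hpM : p.1 M = M := hp.1.2 M (by omega)
    have h1 : Function.update (Function.update p.1 M p.2) M M = p.1 := by
      rw [Function.update_idem, Function.update_eq_self_iff]
      exact hpM.symm
    have h2 : Function.update p.1 M p.2 M = p.2 := Function.update_self _ _ _
    exact Prod.ext h1 h2
  · intro k hk
    simp only [Function.update_idem]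
    exact Function.update_eq_self M k
  · intro p hp
    rfl

private lemma myBase :
    (1:S) = ∑ k ∈ univ.filter (fun k : Fin n → Fin n => ∀ j : Fin n, (j:ℕ) < n → k j = j),
      f (myCoef A n k) * myTail B n k := by
  have hfilter : univ.filter (fun k : Fin n → Fin n => ∀ j : Fin n, (j:ℕ) < n → k j = j)
      = {fun j => j} := by
    ext k
    simp only [mem_filter, mem_univ, true_and, mem_singleton]
    constructor
    · intro h; funext j; exact h j j.isLt
    · intro h j _; rw [h]
  rw [hfilter, Finset.sum_singleton]
  have hcoef : myCoef A n (fun j => j) = 1 := by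
    unfold myCoef
    have h1 : ∀ σ : Equiv.Perm (Fin n),
        (∏ i : Fin n, if (i : ℕ) < n then (if σ i = i then (1:R) else 0) else A (σ i) i)
        = if σ = 1 then 1 else 0 := by
      intro σ
      have : ∀ i : Fin n, (if (i : ℕ) < n then (if σ i = i then (1:R) else 0) else A (σ i) i)
          = if σ i = i then 1 else 0 := fun i => if_pos i.isLt
      rw [Finset.prod_congr rfl (fun i _ => this i), Finset.prod_boole]
      by_cases h : σ = 1
      · simp [h, Equiv.Perm.one_apply]
      · rw [if_neg, if_neg h]
        simp only [mem_univ, forall_true_left]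
        intro hall
        exact h (Equiv.ext fun i => hall i)
    rw [Finset.sum_congr rfl (fun σ _ => by rw [h1 σ, smul_ite, smul_zero]),
      Finset.sum_ite_eq' univ (1 : Equiv.Perm (Fin n))
        (fun σ => (Equiv.Perm.sign σ : ℤ) • (1:R))]
    simp
  have htail : myTail B n (fun j => j) = 1 := by
    unfold myTail
    rw [List.drop_eq_nil_of_le (by simp), List.prod_nil]
  rw [hcoef, htail, map_one, mul_one]


private lemma myMain (hAB : A.map f * B = 1) (d : ℕ) :
    (1:S) = ∑ k ∈ univ.filter
        (fun k : Fin n → Fin n => ∀ j : Fin n, (j:ℕ) < n - d → k j = j),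
      f (myCoef A (n - d) k) * myTail B (n - d) k := by
  induction d with
  | zero => simpa using myBase f A B
  | succ d ih =>
    by_cases h : n ≤ d
    · rw [show n - (d+1) = n - d from by omega]
      exact ih
    · have hm : n - (d+1) < n := by omega
      have hsucc : n - (d+1) + 1 = n - d := by omega
      apply myStep f A B hAB _ hm
      rw [hsucc]
      exact ih

end OneEqSumAux

/-- Expansion of `1 = det(AB)` with ordered products: if `AB = I` with `A` over
the commutative subring `R` of `S`, then
`1 = ∑_k (∑_σ sgn σ · a_{σ(1)k(1)}⋯a_{σ(n)k(n)}) · b_{k(1)1}⋯b_{k(n)n}`,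
products of entries of `B` taken in increasing order of the second index. -/
theorem one_eq_sum_over_functions
    {R S : Type*} [CommRing R] [Ring S] (f : R →+* S) (hf : Function.Injective f)
    {n : ℕ} (A : Matrix (Fin n) (Fin n) R) (B : Matrix (Fin n) (Fin n) S)
    (hAB : A.map f * B = 1) :
    (1 : S) =
      ∑ k : Fin n → Fin n,
        f (∑ σ : Equiv.Perm (Fin n),
            (Equiv.Perm.sign σ : ℤ) • ∏ i : Fin n, A (σ i) (k i)) *
          (List.ofFn fun j => B (k j) j).prod := by
  have h0 := myMain f A B hAB n
  rw [Nat.sub_self] at h0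
  rw [h0]
  rw [Finset.filter_true_of_mem (fun k _ => fun j hj => absurd hj (Nat.not_lt_zero _))]
  apply Finset.sum_congr rfl
  intro k _
  unfold myCoef myTail
  rw [List.drop_zero]
  simp only [Nat.not_lt_zero, if_false]
end

section
/- Let S be a ring and R a commutative subring such that every element of R that is invertible in S is already invertible in R. Then every matrix A ∈ Mat_n(R) invertible in Mat_n(S) is already invertible in Mat_n(R), and A^{-1} has all entries in R; consequently D(R,S) = R(R,S) = R. -/
def rationalClosure {S : Type*} [Ring S] (R₀ : Subring S) : Subring S :=
  sInf {D : Subring S | R₀ ≤ D ∧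
    ∀ (n : ℕ) (A B : Matrix (Fin n) (Fin n) S), (∀ i j, A i j ∈ R₀) →
      A * B = 1 → B * A = 1 → ∀ i j, B i j ∈ D}

section

open Matrix

variable {ι : Type*} [Fintype ι] [DecidableEq ι]

theorem RingHom.map_det_ne_zero_of_mul_map_eq_one {R E : Type*} [CommRing R] [Ring E]
    (ψ : R →+* E) [(RingHom.ker ψ).IsPrime] {A : Matrix ι ι R} {B : Matrix ι ι E}
    (hBA : B * A.map ψ = 1) : ψ A.det ≠ 0 := by
  intro hdet
  set π := Ideal.Quotient.mk (RingHom.ker ψ)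
  obtain ⟨v, hv0, hv⟩ := exists_mulVec_eq_zero_iff.mpr
    (show (π.mapMatrix A).det = 0 by
      rw [← RingHom.map_det, Ideal.Quotient.eq_zero_iff_mem]; exact hdet)
  choose r hr using fun i => Ideal.Quotient.mk_surjective (v i)
  have hAr : A.map ψ *ᵥ (ψ ∘ r) = 0 := by
    funext i
    rw [← RingHom.map_mulVec, Pi.zero_apply, ← RingHom.mem_ker, ← Ideal.Quotient.eq_zero_iff_mem,
      RingHom.map_mulVec, show π ∘ r = v from funext hr]
    exact congrFun hv i
  have hr0 : ψ ∘ r = 0 := by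
    rw [← one_mulVec (ψ ∘ r), ← hBA, ← mulVec_mulVec, hAr, mulVec_zero]
  exact hv0 (funext fun i => by
    rw [← hr i, Pi.zero_apply, Ideal.Quotient.eq_zero_iff_mem]; exact congrFun hr0 i)

theorem Module.annihilator_isPrime_of_isSimpleModule (R T M : Type*)
    [CommRing R] [Ring T] [Algebra R T] [AddCommGroup M] [Module T M] [Module R M]
    [IsScalarTower R T M] [IsSimpleModule T M] : (Module.annihilator R M).IsPrime := by
  have := IsSimpleModule.nontrivial T M
  refine ⟨by rw [Ne, Module.annihilator_eq_top_iff]; exact not_subsingleton M, ?_⟩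
  intro r s hrs
  refine or_iff_not_imp_left.mpr fun hr => Module.mem_annihilator.mpr fun m' => ?_
  obtain ⟨m, hm⟩ : ∃ m : M, r • m ≠ 0 := by simpa [Module.mem_annihilator] using hr
  -- `r • M` is a nonzero submodule since `r` is central, hence all of `M`
  obtain ⟨t, rfl⟩ : ∃ t : T, t • r • m = m' := Submodule.mem_span_singleton.mp
    (IsSimpleModule.span_singleton_eq_top T hm ▸ Submodule.mem_top)
  rw [smul_comm s t, smul_smul, mul_comm, Module.mem_annihilator.mp hrs, smul_zero]

theorem isUnit_algebraMap_det_of_mul_eq_one {R T : Type*} [CommRing R] [Ring T] [Algebra R T]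
    {A : Matrix ι ι R} {B : Matrix ι ι T} (hBA : B * A.map (algebraMap R T) = 1) :
    IsUnit (algebraMap R T A.det) := by
  by_contra hc
  set c := algebraMap R T A.det
  have hspan : Ideal.span {c} ≠ ⊤ := by
    rw [Ne, Ideal.eq_top_iff_one, Ideal.mem_span_singleton']
    rintro ⟨t, ht⟩
    exact hc (isUnit_iff_exists.mpr ⟨t, (Algebra.commutes _ t).trans ht, ht⟩)
  obtain ⟨L, hL, hcL⟩ := Ideal.exists_le_maximal _ hspan
  have : IsSimpleModule T (T ⧸ L) := isSimpleModule_iff_isCoatom.mpr hL.out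
  have : (RingHom.ker (Module.toAddMonoidEnd R (T ⧸ L))).IsPrime :=
    Module.annihilator_isPrime_of_isSimpleModule R T (T ⧸ L)
  have hmap : A.map (Module.toAddMonoidEnd R (T ⧸ L)) =
      (A.map (algebraMap R T)).map (Module.toAddMonoidEnd T (T ⧸ L)) := by
    rw [Matrix.map_map]; congr; ext r x; exact (algebraMap_smul T r x).symm
  have hB :
      B.map (Module.toAddMonoidEnd T (T ⧸ L)) * A.map (Module.toAddMonoidEnd R (T ⧸ L)) = 1 := by
    rw [hmap, ← Matrix.map_mul, hBA, Matrix.map_one _ (map_zero _) (map_one _)]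
  refine RingHom.map_det_ne_zero_of_mul_map_eq_one _ hB
    (RingHom.mem_ker.mp (Module.mem_annihilator.mpr fun x => ?_))
  induction x using Submodule.Quotient.induction_on with | _ t => ?_
  rw [← Submodule.Quotient.mk_smul, Submodule.Quotient.mk_eq_zero, Algebra.smul_def,
    Algebra.commutes]
  exact L.mul_mem_left t (hcL (Ideal.mem_span_singleton_self c))

theorem Matrix.commute_inv_apply_of_commute_apply {S : Type*} [Ring S] {X Y : Matrix ι ι S}
    {s : S} (hX : ∀ i j, Commute s (X i j)) (hXY : X * Y = 1) (hYX : Y * X = 1) (i j : ι) :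
    Commute s (Y i j) := by
  have hsX : Commute (scalar ι s) X := by
    ext k l; simp [(hX k l).eq]
  have hsY : scalar ι s * Y = Y * scalar ι s :=
    Commute.units_inv_right (u := ⟨X, Y, hXY, hYX⟩) hsX
  simpa [Commute, SemiconjBy] using congrFun (congrFun hsY i) j

theorem isUnit_map_det_of_mul_map_eq_one {R S : Type*} [CommRing R] [Ring S] (f : R →+* S)
    {A : Matrix ι ι R} {B : Matrix ι ι S} (hAB : A.map f * B = 1) (hBA : B * A.map f = 1) :
    IsUnit (f A.det) := by
  set T := Subring.centralizer (Set.range f)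
  have hfT (r : R) : f r ∈ T := Subring.mem_centralizer_iff.mpr <| by
    rintro _ ⟨r', rfl⟩; rw [← map_mul, ← map_mul, mul_comm]
  have hBT (i j : ι) : B i j ∈ T := Subring.mem_centralizer_iff.mpr <| by
    rintro _ ⟨r, rfl⟩
    exact (Matrix.commute_inv_apply_of_commute_apply (fun _ _ => Commute.map (Commute.all r _) f)
      hAB hBA i j).eq
  let _ : Algebra R T := (f.codRestrict T hfT).toAlgebra' fun r t =>
    Subtype.ext <| Subring.mem_centralizer_iff.mp t.2 (f r) ⟨r, rfl⟩
  have hBA' : Matrix.of (fun i j => (⟨B i j, hBT i j⟩ : T)) * A.map (algebraMap R T) = 1 :=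
    Matrix.map_injective Subtype.val_injective <| by
      change T.subtype.mapMatrix _ = T.subtype.mapMatrix 1
      rw [map_mul, map_one]
      exact hBA
  exact (isUnit_algebraMap_det_of_mul_eq_one hBA').map T.subtype

theorem isUnit_of_isUnit_map_of_inverse_closed {R S : Type*} [CommRing R] [Ring S]
    {f : R →+* S} (hf : Function.Injective f)
    (hcl : ∀ (r : R) (u : S), f r * u = 1 → u * f r = 1 → ∃ v : R, f v = u)
    {r : R} (h : IsUnit (f r)) : IsUnit r := by
  obtain ⟨u, hu⟩ := h
  obtain ⟨v, hv⟩ := hcl r ↑u⁻¹ (hu ▸ u.mul_inv) (hu ▸ u.inv_mul)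
  exact isUnit_iff_exists_inv.mpr ⟨v, hf <| by rw [map_mul, hv, map_one, ← hu, u.mul_inv]⟩

theorem isUnit_and_mem_range_of_map_inverse_closed {R S : Type*} [CommRing R] [Ring S]
    {f : R →+* S} (hf : Function.Injective f)
    (hcl : ∀ (r : R) (u : S), f r * u = 1 → u * f r = 1 → ∃ v : R, f v = u)
    {A : Matrix ι ι R} {B : Matrix ι ι S}
    (hAB : A.map f * B = 1) (hBA : B * A.map f = 1) :
    IsUnit A ∧ ∀ i j, B i j ∈ Set.range f := by
  have hdet : IsUnit A.det :=
    isUnit_of_isUnit_map_of_inverse_closed hf hcl (isUnit_map_det_of_mul_map_eq_one f hAB hBA)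
  have hB : B = A⁻¹.map f := by
    refine (left_inv_eq_right_inv (a := A.map f) ?_ hAB).symm
    rw [← f.mapMatrix_apply, ← f.mapMatrix_apply, ← map_mul, nonsing_inv_mul A hdet, map_one]
  exact ⟨(isUnit_iff_isUnit_det A).mpr hdet, fun i j => ⟨A⁻¹ i j, by rw [hB]; rfl⟩⟩

end

theorem divisionClosure_eq_self {S : Type*} [Ring S] {R₀ : Subring S}
    (h : ∀ x ∈ R₀, ∀ y : S, x * y = 1 → y * x = 1 → y ∈ R₀) : divisionClosure R₀ = R₀ :=
  le_antisymm (sInf_le ⟨le_rfl, h⟩) (le_sInf fun _ hD => hD.1)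

theorem rationalClosure_eq_self {S : Type*} [Ring S] {R₀ : Subring S}
    (h : ∀ (n : ℕ) (A B : Matrix (Fin n) (Fin n) S), (∀ i j, A i j ∈ R₀) →
      A * B = 1 → B * A = 1 → ∀ i j, B i j ∈ R₀) : rationalClosure R₀ = R₀ :=
  le_antisymm (sInf_le ⟨le_rfl, h⟩) (le_sInf fun _ hD => hD.1)

/-- If the commutative subring `R` of `S` is closed under inverses from `S`,
then every matrix over `R` invertible over `S` is already invertible over `R`,
its inverse has entries in `R`, and `D(R,S) = R(R,S) = R`. -/
theorem closures_eq_self_of_inverse_closed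
    {R S : Type*} [CommRing R] [Ring S] (f : R →+* S) (hf : Function.Injective f)
    (hcl : ∀ (r : R) (u : S), f r * u = 1 → u * f r = 1 → ∃ v : R, f v = u) :
    (∀ (n : ℕ) (A : Matrix (Fin n) (Fin n) R) (B : Matrix (Fin n) (Fin n) S),
      A.map f * B = 1 → B * A.map f = 1 →
        IsUnit A ∧ ∀ i j, B i j ∈ Set.range f) ∧
    divisionClosure f.range = f.range ∧
    rationalClosure f.range = f.range := by
  refine ⟨fun _ _ _ => isUnit_and_mem_range_of_map_inverse_closed hf hcl,
    divisionClosure_eq_self ?_, rationalClosure_eq_self ?_⟩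
  · rintro _ ⟨r, rfl⟩ y h₁ h₂
    exact hcl r y h₁ h₂
  · intro n A B hA hAB hBA i j
    choose A' hA' using hA
    obtain rfl : (Matrix.of A').map f = A := by ext; exact hA' _ _
    exact (isUnit_and_mem_range_of_map_inverse_closed hf hcl hAB hBA).2 i j
end
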